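/- A rim-hook h is a factor of a reverse plane partition π (i.e., π = h * π̃ for some reverse plane partition π̃) if and only if h = h(π, u) for some candidate u ∈ C(π) such that the path Q(π, u) is (π − Q(π,u))-compatible and π − Q(π, u) is a reverse plane partition. -/

import Mathlib

abbrev Cell := ℕ × ℕ

def nC (u : Cell) : Cell := (u.1 - 1, u.2)
def eC (u : Cell) : Cell := (u.1, u.2 + 1)
def sC (u : Cell) : Cell := (u.1 + 1, u.2)
def wC (u : Cell) : Cell := (u.1, u.2 - 1)
def seC (u : Cell) : Cell := (u.1 + 1, u.2 + 1)

/-- `lam i` is the `i`-th part (1-indexed); weakly decreasing with finitely many nonzero parts. -/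
def IsPartition (lam : ℕ → ℕ) : Prop :=
  (∀ i, lam (i + 1) ≤ lam i) ∧ (∃ N, ∀ i, N ≤ i → lam i = 0)

/-- The Young diagram of `lam`: cells `(i,j)` with `1 ≤ i`, `1 ≤ j ≤ lam i`. -/
def cells (lam : ℕ → ℕ) : Set Cell := {u | 1 ≤ u.1 ∧ 1 ≤ u.2 ∧ u.2 ≤ lam u.1}

/-- The conjugate partition. -/
noncomputable def conj (lam : ℕ → ℕ) (j : ℕ) : ℕ := {i | 1 ≤ i ∧ j ≤ lam i}.ncard

def content (u : Cell) : ℤ := (u.2 : ℤ) - (u.1 : ℤ)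

/-- Hook length of the cell `u = (i,j)`: `lam i + lam' j - i - j + 1`. -/
noncomputable def hookLen (lam : ℕ → ℕ) (u : Cell) : ℕ := lam u.1 + conj lam u.2 - u.1 - u.2 + 1

/-- A North-East path in `lam`. -/
def IsNEPath (lam : ℕ → ℕ) (P : List Cell) : Prop :=
  P ≠ [] ∧ (∀ u ∈ P, u ∈ cells lam) ∧ List.Chain' (fun u v => v = nC u ∨ v = eC u) P

/-- Head of a path. -/
def hd (P : List Cell) : Cell := P.headD (0, 0)
/-- Tail (last cell) of a path. -/
def lst (P : List Cell) : Cell := P.getLastD (0, 0)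
/-- Length of a path (number of steps). -/
def len (P : List Cell) : ℕ := P.length - 1

/-- A rim-hook of `lam`. -/
def IsRimHook (lam : ℕ → ℕ) (h : List Cell) : Prop :=
  IsNEPath lam h ∧ sC (hd h) ∉ cells lam ∧ eC (lst h) ∉ cells lam ∧
    ∀ u ∈ h, seC u ∉ cells lam

def IsOuterCorner (lam : ℕ → ℕ) (u : Cell) : Prop :=
  u ∈ cells lam ∧ eC u ∉ cells lam ∧ sC u ∉ cells lam

def IsInnerCorner (lam : ℕ → ℕ) (u : Cell) : Prop :=
  u ∈ cells lam ∧ eC u ∈ cells lam ∧ sC u ∈ cells lam ∧ seC u ∉ cells lam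

def IsCornerContent (lam : ℕ → ℕ) (z : ℤ) : Prop :=
  ∃ v, (IsInnerCorner lam v ∨ IsOuterCorner lam v) ∧ content v = z

/-- Cells whose content is the content of an inner corner. -/
def regionI (lam : ℕ → ℕ) : Set Cell :=
  {u ∈ cells lam | ∃ v, IsInnerCorner lam v ∧ content v = content u}

/-- Cells whose content is the content of an outer corner. -/
def regionO (lam : ℕ → ℕ) : Set Cell :=
  {u ∈ cells lam | ∃ v, IsOuterCorner lam v ∧ content v = content u}

/-- Cells with `c(u) < o_1` or `i_k < c(u) < o_{k+1}`: the content is not a corner content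
and the largest corner content below it (if any) is an inner-corner content. -/
def regionA (lam : ℕ → ℕ) : Set Cell :=
  {u ∈ cells lam | ¬ IsCornerContent lam (content u) ∧
    ∀ w, IsOuterCorner lam w → content w < content u →
      ∃ v, IsInnerCorner lam v ∧ content w < content v ∧ content v < content u}

/-- Cells with `o_k < c(u) < i_k` or `o_{r+1} < c(u)`: the remaining cells. -/
def regionB (lam : ℕ → ℕ) : Set Cell :=
  cells lam \ (regionI lam ∪ regionO lam ∪ regionA lam)

/-- A reverse plane partition of shape `lam`, as a function vanishing outside `lam`
which is weakly increasing along rows and columns. -/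
def IsRPP (lam : ℕ → ℕ) (π : Cell → ℕ) : Prop :=
  (∀ u, u ∉ cells lam → π u = 0) ∧
  (∀ u ∈ cells lam, eC u ∈ cells lam → π u ≤ π (eC u)) ∧
  (∀ u ∈ cells lam, sC u ∈ cells lam → π u ≤ π (sC u))

/-- `π + P`: increase by one along the path. -/
def addPath (π : Cell → ℕ) (P : List Cell) : Cell → ℕ :=
  fun u => if u ∈ P then π u + 1 else π u

/-- `π - P`: decrease by one along the path. -/
def subPath (π : Cell → ℕ) (P : List Cell) : Cell → ℕ :=
  fun u => if u ∈ P then π u - 1 else π u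

/-- The path `P` is `π`-compatible. -/
def Compatible (lam : ℕ → ℕ) (π : Cell → ℕ) (P : List Cell) : Prop :=
  (∀ u ∈ P, u ∈ regionI lam ∪ regionA lam → eC u ∈ P ∧ π (eC u) = π u) ∧
  (∀ u ∈ P, nC u ∈ P → π (nC u) = π u)

/-- `P` witnesses the insertion of the rim-hook `h` into `π`. -/
def InsertPath (lam : ℕ → ℕ) (π : Cell → ℕ) (h P : List Cell) : Prop :=
  IsNEPath lam P ∧ Compatible lam π P ∧ lst P = lst h ∧ len P = len h ∧
    IsRPP lam (addPath π P)

/-- The rim-hook `h` inserts into `π`. -/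
def Inserts (lam : ℕ → ℕ) (h : List Cell) (π : Cell → ℕ) : Prop :=
  ∃ P, InsertPath lam π h P

open Classical in
/-- `h * π`, the insertion of `h` into `π` (equal to `π` if `h` does not insert). -/
noncomputable def insertRH (lam : ℕ → ℕ) (h : List Cell) (π : Cell → ℕ) : Cell → ℕ :=
  if hP : Inserts lam h π then addPath π hP.choose else π

/-- `h₁ * h₂ * ⋯ * h_s * 0`. -/
noncomputable def insertList (lam : ℕ → ℕ) (hs : List (List Cell)) : Cell → ℕ :=
  hs.foldr (insertRH lam) (fun _ => 0)

/-- Reverse lexicographic order on rim-hooks. -/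
def RHle (f h : List Cell) : Prop :=
  content (hd h) < content (hd f) ∨
    (content (hd f) = content (hd h) ∧ content (lst f) ≤ content (lst h))

/-- Reverse lexicographic order on cells. -/
def revlexLE (u v : Cell) : Prop := v.2 < u.2 ∨ (u.2 = v.2 ∧ v.1 ≤ u.1)

/-- Content order on cells: `u ⊴ v`. -/
def contentLE (u v : Cell) : Prop :=
  content v < content u ∨ (content u = content v ∧ v.1 ≤ u.1)

/-- The set of candidates of `π`. -/
def candidates (lam : ℕ → ℕ) (π : Cell → ℕ) : Set Cell :=
  {u ∈ regionO lam | π (wC u) < π u} ∪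
    {u ∈ regionA lam | π (wC u) < π u ∧ π (nC u) < π u}

/-- One step of the path `Q(π,u)`. -/
def QStep (lam : ℕ → ℕ) (π : Cell → ℕ) (v v' : Cell) : Prop :=
  (v ∈ regionO lam ∪ regionB lam ∧ π (nC v) = π v ∧ v' = nC v) ∨
  ((v ∈ regionI lam ∪ regionA lam ∨ (π (nC v) < π v ∧ eC v ∈ cells lam)) ∧ v' = eC v)

/-- `P` is the path `Q(π,u)`: starts at `u`, follows the `Q`-steps, and terminates
when `π(n v) < π(v)` and `e v ∉ lam`. -/
def IsQPath (lam : ℕ → ℕ) (π : Cell → ℕ) (u : Cell) (P : List Cell) : Prop :=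
  P ≠ [] ∧ (∀ v ∈ P, v ∈ cells lam) ∧ hd P = u ∧ List.Chain' (QStep lam π) P ∧
    π (nC (lst P)) < π (lst P) ∧ eC (lst P) ∉ cells lam

/-!
Along a North-East path the content increases by one at each step, so such a path never
contains both `n v` and `e v`, nor `n` of its last cell or `w` of its first. Hence if
`π = π̃ + P`, the neighbours that the rules for `Q(π, ·)` inspect off the path keep their
`π̃`-values, and `π̃`-compatibility of `P` turns into exactly those rules: `P = Q(π, hd P)`.
The head of `P` has the content of the head of the rim-hook, a cell at the bottom of its
column; such contents are those of regions O and A, which makes `hd P` a candidate.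
Conversely a `Q`-path is North-East and `π` weakly increases along it from a candidate,
where it is positive, so `(π - Q) + Q = π`.
-/

theorem content_eC (v : Cell) : content (eC v) = content v + 1 := by
  simp only [content, eC]; push_cast; ring

theorem content_nC {v : Cell} (hv : 1 ≤ (nC v).1) : content (nC v) = content v + 1 := by
  simp only [content, nC] at hv ⊢; omega

theorem content_wC {v : Cell} (hv : 1 ≤ (wC v).2) : content (wC v) + 1 = content v := by
  simp only [content, wC] at hv ⊢; omega

theorem nC_ne_eC (v : Cell) : nC v ≠ eC v := by
  simp [nC, eC]

theorem hd_eq_getElem {P : List Cell} (hP : 0 < P.length) : hd P = P[0] := by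
  cases P with
  | nil => simp at hP
  | cons a t => rfl

theorem lst_eq_getElem {P : List Cell} (hP : 0 < P.length) : lst P = P[P.length - 1] := by
  rw [lst, List.getLastD_eq_getLast?, List.getLast?_eq_getElem?, List.getElem?_eq_getElem]
  rfl

theorem hd_mem {P : List Cell} (hP : P ≠ []) : hd P ∈ P := by
  rw [hd_eq_getElem (List.length_pos_iff.mpr hP)]
  exact List.getElem_mem _

theorem lst_mem {P : List Cell} (hP : P ≠ []) : lst P ∈ P := by
  rw [lst_eq_getElem (List.length_pos_iff.mpr hP)]
  exact List.getElem_mem _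

namespace IsNEPath

variable {lam : ℕ → ℕ} {P : List Cell}

theorem content_getElem (hP : IsNEPath lam P) (k : ℕ) (hk : k < P.length) :
    content P[k] = content (hd P) + k := by
  induction k with
  | zero => rw [hd_eq_getElem hk]; simp
  | succ k ih =>
    have hnext := (hP.2.1 _ (List.getElem_mem hk)).1
    rcases List.isChain_iff_getElem.mp hP.2.2 k hk with hstep | hstep <;>
      rw [hstep] at hnext ⊢
    · rw [content_nC hnext, ih]; push_cast; ring
    · rw [content_eC, ih]; push_cast; ring

theorem content_lst (hP : IsNEPath lam P) : content (lst P) = content (hd P) + len P := by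
  have hlen : 0 < P.length := List.length_pos_iff.mpr hP.1
  rw [lst_eq_getElem hlen, hP.content_getElem, len]

theorem content_mem_Icc (hP : IsNEPath lam P) {v : Cell} (hv : v ∈ P) :
    content (hd P) ≤ content v ∧ content v ≤ content (lst P) := by
  obtain ⟨k, hk, rfl⟩ := List.mem_iff_getElem.mp hv
  rw [hP.content_lst, hP.content_getElem, len]
  omega

theorem eq_of_content_eq (hP : IsNEPath lam P) {v w : Cell} (hv : v ∈ P) (hw : w ∈ P)
    (hvw : content v = content w) : v = w := by
  obtain ⟨i, hi, rfl⟩ := List.mem_iff_getElem.mp hv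
  obtain ⟨j, hj, rfl⟩ := List.mem_iff_getElem.mp hw
  rw [hP.content_getElem, hP.content_getElem] at hvw
  obtain rfl : i = j := by omega
  rfl

theorem not_nC_mem_and_eC_mem (hP : IsNEPath lam P) (v : Cell) : ¬ (nC v ∈ P ∧ eC v ∈ P) :=
  fun ⟨hn, he⟩ => nC_ne_eC v <| hP.eq_of_content_eq hn he <| by
    rw [content_nC (hP.2.1 _ hn).1, content_eC]

theorem nC_lst_not_mem (hP : IsNEPath lam P) : nC (lst P) ∉ P := fun hn => by
  have := (hP.content_mem_Icc hn).2
  rw [content_nC (hP.2.1 _ hn).1] at this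
  omega

theorem wC_hd_not_mem (hP : IsNEPath lam P) : wC (hd P) ∉ P := fun hw => by
  have := (hP.content_mem_Icc hw).1
  rw [← content_wC (hP.2.1 _ hw).2.1] at this
  omega

end IsNEPath

namespace IsRPP

variable {lam : ℕ → ℕ} {π : Cell → ℕ}

theorem apply_nC_le (hπ : IsRPP lam π) {v : Cell} (hv : v ∈ cells lam) : π (nC v) ≤ π v := by
  by_cases hn : nC v ∈ cells lam
  · have hsn : sC (nC v) = v :=
      Prod.ext (by have := hn.1; simp only [sC, nC] at this ⊢; omega) rfl
    simpa [hsn] using hπ.2.2 _ hn (hsn ▸ hv)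
  · simp [hπ.1 _ hn]

theorem apply_wC_le (hπ : IsRPP lam π) {v : Cell} (hv : v ∈ cells lam) : π (wC v) ≤ π v := by
  by_cases hw : wC v ∈ cells lam
  · have hew : eC (wC v) = v :=
      Prod.ext rfl (by have := hw.2.1; simp only [eC, wC] at this ⊢; omega)
    simpa [hew] using hπ.2.1 _ hw (hew ▸ hv)
  · simp [hπ.1 _ hw]

end IsRPP

section PathArithmetic

variable {π : Cell → ℕ} {P : List Cell}

theorem addPath_lt_of_not_mem {v w : Cell} (hv : v ∈ P) (hw : w ∉ P) (hle : π w ≤ π v) :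
    addPath π P w < addPath π P v := by
  simp only [addPath, if_pos hv, if_neg hw]
  omega

theorem subPath_addPath : subPath (addPath π P) P = π := by
  funext v
  by_cases hv : v ∈ P <;> simp [subPath, addPath, hv]

theorem addPath_subPath (hpos : ∀ v ∈ P, 0 < π v) : addPath (subPath π P) P = π := by
  funext v
  by_cases hv : v ∈ P
  · simp only [addPath, subPath, if_pos hv]
    have := hpos v hv
    omega
  · simp [addPath, subPath, hv]

end PathArithmetic

theorem Antitone.exists_apply_succ_eq_of_lt {α : Type*} [LinearOrder α] {f : ℕ → α}
    (hf : Antitone f) {a c : ℕ} (hac : a ≤ c) (hlt : f c < f a) :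
    ∃ b, a ≤ b ∧ b < c ∧ f c < f b ∧ f (b + 1) = f c := by
  induction c, hac using Nat.le_induction with
  | base => exact absurd hlt (lt_irrefl _)
  | succ c hac ih =>
    rcases (hf c.le_succ).lt_or_eq with hdrop | hflat
    · exact ⟨c, hac, c.lt_succ_self, hdrop, rfl⟩
    · obtain ⟨b, hab, hbc, hcb, hb⟩ := ih (hflat ▸ hlt)
      exact ⟨b, hab, hbc.trans c.lt_succ_self, hflat ▸ hcb, hb.trans hflat.symm⟩

section Corners

variable {lam : ℕ → ℕ}

theorem isOuterCorner_iff {r c : ℕ} :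
    IsOuterCorner lam (r, c) ↔ 1 ≤ r ∧ 1 ≤ c ∧ c = lam r ∧ lam (r + 1) < c := by
  simp only [IsOuterCorner, cells, eC, sC, Set.mem_ofPred_eq]
  omega

theorem isInnerCorner_iff {r c : ℕ} :
    IsInnerCorner lam (r, c) ↔ 1 ≤ r ∧ 1 ≤ c ∧ c < lam r ∧ c = lam (r + 1) := by
  simp only [IsInnerCorner, cells, eC, sC, seC, Set.mem_ofPred_eq]
  omega

theorem exists_isInnerCorner_content_between (hlam : IsPartition lam) {w₁ w₂ : Cell}
    (h₁ : IsOuterCorner lam w₁) (h₂ : IsOuterCorner lam w₂) (hlt : content w₁ < content w₂) :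
    ∃ v, IsInnerCorner lam v ∧ content w₁ < content v ∧ content v < content w₂ := by
  obtain ⟨r₁, c₁⟩ := w₁
  obtain ⟨r₂, c₂⟩ := w₂
  obtain ⟨-, hc₁, rfl, -⟩ := isOuterCorner_iff.mp h₁
  obtain ⟨hr₂, -, rfl, hdrop₂⟩ := isOuterCorner_iff.mp h₂
  simp only [content] at hlt ⊢
  have hanti : Antitone lam := antitone_nat_of_succ_le hlam.1
  have hr : r₂ < r₁ := by
    by_contra! hle
    have := hanti hle
    omega
  have hlam_lt : lam r₁ < lam r₂ := lt_of_le_of_lt (hanti hr) hdrop₂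
  obtain ⟨b, hb₂, hb₁, hlt_b, hb_succ⟩ := hanti.exists_apply_succ_eq_of_lt hr.le hlam_lt
  refine ⟨(b, lam r₁), isInnerCorner_iff.mpr ⟨by omega, hc₁, hlt_b, hb_succ.symm⟩, ?_, ?_⟩ <;>
    simp only <;> omega

theorem IsInnerCorner.content_lt_or_gt (hlam : IsPartition lam) {v : Cell}
    (hv : IsInnerCorner lam v) {i j : ℕ} (hj : lam (i + 1) < j) :
    content v < content (i, j) ∨ content (i, lam i) < content v := by
  obtain ⟨r, c⟩ := v
  obtain ⟨hr, -, hc, rfl⟩ := isInnerCorner_iff.mp hv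
  have hanti : Antitone lam := antitone_nat_of_succ_le hlam.1
  simp only [content]
  rcases lt_or_ge r i with hri | hri
  · have := hanti (show r + 1 ≤ i by omega)
    omega
  · have := hanti (show i + 1 ≤ r + 1 by omega)
    omega

theorem IsOuterCorner.content_lt_or_ge (hlam : IsPartition lam) {w : Cell}
    (hw : IsOuterCorner lam w) {i j : ℕ} (hj : lam (i + 1) < j) :
    content w < content (i, j) ∨ content (i, lam i) ≤ content w := by
  obtain ⟨r, c⟩ := w
  obtain ⟨hr, -, rfl, -⟩ := isOuterCorner_iff.mp hw
  have hanti : Antitone lam := antitone_nat_of_succ_le hlam.1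
  simp only [content]
  rcases le_or_gt r i with hri | hri
  · have := hanti hri
    omega
  · have := hanti (show i + 1 ≤ r by omega)
    omega

/- The only corner whose content lies between those of `(i, j)` and `(i, lam i)` is the outer
corner `(i, lam i)`. -/
theorem mem_regionO_union_regionA_of_sC_not_mem (hlam : IsPartition lam) {u : Cell}
    (hu : u ∈ cells lam) (hs : sC u ∉ cells lam) : u ∈ regionO lam ∪ regionA lam := by
  obtain ⟨i, j⟩ := u
  obtain ⟨hi, hj, hji⟩ : 1 ≤ i ∧ 1 ≤ j ∧ j ≤ lam i := hu
  have hdrop : lam (i + 1) < j := by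
    by_contra! hle
    exact hs ⟨by simp [sC], hj, hle⟩
  have houter : IsOuterCorner lam (i, lam i) := isOuterCorner_iff.mpr ⟨hi, by omega, rfl, by omega⟩
  rcases hji.eq_or_lt with rfl | hlt
  · exact Or.inl ⟨⟨hi, hj, hji⟩, _, houter, rfl⟩
  have hco : content (i, j) < content (i, lam i) := by simp only [content]; omega
  refine Or.inr ⟨⟨hi, hj, hji⟩, ?_, fun w hw hwu => ?_⟩
  · rintro ⟨v, hv | hv, hvu⟩
    · have := hv.content_lt_or_gt hlam hdrop
      omega
    · have := hv.content_lt_or_ge hlam hdrop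
      omega
  · obtain ⟨v, hv, hwv, hvo⟩ := exists_isInnerCorner_content_between hlam hw houter (hwu.trans hco)
    refine ⟨v, hv, hwv, ?_⟩
    have := hv.content_lt_or_gt hlam hdrop
    omega

theorem mem_regionO_union_regionA_of_content_eq {u v : Cell} (hu : u ∈ cells lam)
    (hv : v ∈ regionO lam ∪ regionA lam) (huv : content u = content v) :
    u ∈ regionO lam ∪ regionA lam := by
  rcases hv with ⟨-, w, hw, hwv⟩ | ⟨-, hcorner, hbelow⟩
  · exact Or.inl ⟨hu, w, hw, hwv.trans huv.symm⟩
  · exact Or.inr ⟨hu, huv ▸ hcorner, huv ▸ hbelow⟩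

end Corners

theorem mem_regionO_union_regionB_of_not_mem {lam : ℕ → ℕ} {v : Cell} (hv : v ∈ cells lam)
    (hIA : v ∉ regionI lam ∪ regionA lam) : v ∈ regionO lam ∪ regionB lam := by
  by_cases hO : v ∈ regionO lam
  · exact Or.inl hO
  · refine Or.inr ⟨hv, ?_⟩
    simp only [Set.mem_union, not_or] at hIA ⊢
    exact ⟨⟨hIA.1, hO⟩, hIA.2⟩

namespace IsNEPath

variable {lam : ℕ → ℕ} {π : Cell → ℕ} {P : List Cell}

theorem content_hd_eq {Q : List Cell} (hP : IsNEPath lam P) (hQ : IsNEPath lam Q)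
    (hlst : lst P = lst Q) (hlen : len P = len Q) : content (hd P) = content (hd Q) := by
  have := hP.content_lst
  rw [hlst, hQ.content_lst, hlen] at this
  omega

theorem isQPath_addPath (hπ : IsRPP lam π) (hP : IsNEPath lam P) (hc : Compatible lam π P)
    (hend : eC (lst P) ∉ cells lam) : IsQPath lam (addPath π P) (hd P) P := by
  refine ⟨hP.1, hP.2.1, rfl, hP.2.2.imp_of_mem_imp fun a b ha hb hab => ?_, ?_, hend⟩
  · rcases hab with rfl | rfl
    · have he : eC a ∉ P := fun he => hP.not_nC_mem_and_eC_mem a ⟨hb, he⟩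
      have hOB := mem_regionO_union_regionB_of_not_mem (hP.2.1 a ha) fun hIA => he (hc.1 a ha hIA).1
      exact Or.inl ⟨hOB, by simp only [addPath, if_pos ha, if_pos hb, hc.2 a ha hb], rfl⟩
    · by_cases hIA : a ∈ regionI lam ∪ regionA lam
      · exact Or.inr ⟨Or.inl hIA, rfl⟩
      · have hn : nC a ∉ P := fun hn => hP.not_nC_mem_and_eC_mem a ⟨hn, hb⟩
        exact Or.inr ⟨Or.inr ⟨addPath_lt_of_not_mem ha hn (hπ.apply_nC_le (hP.2.1 a ha)),
          hP.2.1 _ hb⟩, rfl⟩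
  · have hl := lst_mem hP.1
    exact addPath_lt_of_not_mem hl hP.nC_lst_not_mem (hπ.apply_nC_le (hP.2.1 _ hl))

theorem hd_mem_candidates_addPath (hπ : IsRPP lam π) (hP : IsNEPath lam P)
    (hc : Compatible lam π P) (hOA : hd P ∈ regionO lam ∪ regionA lam) :
    hd P ∈ candidates lam (addPath π P) := by
  have hu := hd_mem hP.1
  have hw : addPath π P (wC (hd P)) < addPath π P (hd P) :=
    addPath_lt_of_not_mem hu hP.wC_hd_not_mem (hπ.apply_wC_le (hP.2.1 _ hu))
  rcases hOA with hO | hA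
  · exact Or.inl ⟨hO, hw⟩
  · have hn : nC (hd P) ∉ P := fun hn =>
      hP.not_nC_mem_and_eC_mem _ ⟨hn, (hc.1 _ hu (Or.inr hA)).1⟩
    exact Or.inr ⟨hA, hw, addPath_lt_of_not_mem hu hn (hπ.apply_nC_le (hP.2.1 _ hu))⟩

end IsNEPath

section QPath

variable {lam : ℕ → ℕ} {π : Cell → ℕ} {u v : Cell} {Q : List Cell}

theorem QStep.ne_step (hstep : QStep lam π u v) : v = nC u ∨ v = eC u := by
  rcases hstep with ⟨-, -, rfl⟩ | ⟨-, rfl⟩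
  exacts [Or.inl rfl, Or.inr rfl]

theorem QStep.apply_le (hπ : IsRPP lam π) (hstep : QStep lam π u v) (hu : u ∈ cells lam)
    (hv : v ∈ cells lam) : π u ≤ π v := by
  rcases hstep with ⟨-, heq, rfl⟩ | ⟨-, rfl⟩
  exacts [heq.ge, hπ.2.1 u hu hv]

theorem IsQPath.isNEPath (hQ : IsQPath lam π u Q) : IsNEPath lam Q :=
  ⟨hQ.1, hQ.2.1, hQ.2.2.2.1.imp fun _ _ => QStep.ne_step⟩

theorem IsQPath.apply_le (hπ : IsRPP lam π) (hQ : IsQPath lam π u Q) (hv : v ∈ Q) :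
    π u ≤ π v := by
  obtain ⟨hne, hcell, rfl, hchain, -⟩ := hQ
  obtain ⟨a, t, rfl⟩ := List.exists_cons_of_ne_nil hne
  have hmono : List.IsChain (fun x y => π x ≤ π y) (a :: t) :=
    hchain.imp_of_mem_imp fun x y hx hy hxy => hxy.apply_le hπ (hcell x hx) (hcell y hy)
  rcases List.mem_cons.mp hv with rfl | hv
  exacts [le_rfl, hmono.rel_cons hv]

theorem pos_of_mem_candidates (hu : u ∈ candidates lam π) : 0 < π u := by
  rcases hu with ⟨-, hlt⟩ | ⟨-, hlt, -⟩ <;> exact Nat.zero_lt_of_lt hlt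

end QPath

/-- A rim-hook `h` is a factor of `π` iff `h = h(π,u)` for some candidate `u ∈ C(π)`
such that `Q(π,u)` is `(π - Q(π,u))`-compatible and `π - Q(π,u)` is a reverse plane
partition. -/
theorem factor_iff_candidate (lam : ℕ → ℕ) (hlam : IsPartition lam)
    (π : Cell → ℕ) (hπ : IsRPP lam π) (h : List Cell) (hh : IsRimHook lam h) :
    (∃ πt : Cell → ℕ, IsRPP lam πt ∧ ∃ P, InsertPath lam πt h P ∧ addPath πt P = π) ↔
    (∃ u ∈ candidates lam π, ∃ Q, IsQPath lam π u Q ∧ lst h = lst Q ∧ len h = len Q ∧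
      Compatible lam (subPath π Q) Q ∧ IsRPP lam (subPath π Q)) := by
  obtain ⟨hhP, hh_bottom, hh_end, -⟩ := hh
  constructor
  · rintro ⟨πt, hπt, P, ⟨hP, hcomp, hlst, hlen, -⟩, rfl⟩
    have hh_hd : hd h ∈ regionO lam ∪ regionA lam :=
      mem_regionO_union_regionA_of_sC_not_mem hlam (hhP.2.1 _ (hd_mem hhP.1)) hh_bottom
    have hP_hd : hd P ∈ regionO lam ∪ regionA lam :=
      mem_regionO_union_regionA_of_content_eq (hP.2.1 _ (hd_mem hP.1)) hh_hd
        (hP.content_hd_eq hhP hlst hlen)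
    refine ⟨hd P, hP.hd_mem_candidates_addPath hπt hcomp hP_hd, P,
      hP.isQPath_addPath hπt hcomp (hlst ▸ hh_end), hlst.symm, hlen.symm, ?_, ?_⟩ <;>
      rwa [subPath_addPath]
  · rintro ⟨u, hu, Q, hQ, hlst, hlen, hcomp, hsub⟩
    have hQπ : addPath (subPath π Q) Q = π :=
      addPath_subPath fun v hv => (pos_of_mem_candidates hu).trans_le (hQ.apply_le hπ hv)
    exact ⟨subPath π Q, hsub, Q, ⟨hQ.isNEPath, hcomp, hlst.symm, hlen.symm, by rwa [hQπ]⟩, hQπ⟩
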